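/- Let ρ be a positive semidefinite N×N matrix of rank R with eigenvalue decomposition ρ = Φ M Φ† where Φ is unitary and M is a diagonal matrix of eigenvalues. Then for an N×K matrix Ψ and a K×K nonnegative diagonal matrix W, we have ρ = Ψ W Ψ† if and only if there exists an R×K matrix T with T T† = I_R such that Ψ W^{1/2} = Φ M^{1/2} T (where we restrict M, Φ to the R nonzero eigenvalues and corresponding eigenvectors). -/

import Mathlib

open Matrix ComplexOrder

/-!
Write `ρ = B Bᴴ` with `B = Φ M^{1/2}` and `Ψ W Ψᴴ = A Aᴴ` with `A = Ψ W^{1/2}`. Since `m > 0`, `B` has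
the left inverse `L = M^{-1/2} Φᴴ`. If `A Aᴴ = B Bᴴ`, every `C` with `C B = 0` satisfies
`(C A)(C A)ᴴ = (C B)(C B)ᴴ = 0`, hence `C A = 0`; taking `C = 1 - B L` gives `A = B T` with `T = L A`,
and `T Tᴴ = L B Bᴴ Lᴴ = 1`. Conversely `A = B T` with `T Tᴴ = 1` gives `A Aᴴ = B Bᴴ` directly.
-/

namespace Matrix

section StarOrderedRing

variable {m k r R : Type*} [Fintype m] [Fintype k] [Fintype r]
  [PartialOrder R] [Ring R] [StarRing R] [StarOrderedRing R] [NoZeroDivisors R]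

theorem mul_eq_zero_of_mul_conjTranspose_eq {p : Type*} {A : Matrix m k R} {B : Matrix m r R}
    {C : Matrix p m R} (hAB : A * Aᴴ = B * Bᴴ) (hCB : C * B = 0) : C * A = 0 := by
  rw [← self_mul_conjTranspose_eq_zero]
  calc C * A * (C * A)ᴴ = C * (A * Aᴴ) * Cᴴ := by simp only [conjTranspose_mul, Matrix.mul_assoc]
    _ = C * B * (C * B)ᴴ := by simp only [hAB, conjTranspose_mul, Matrix.mul_assoc]
    _ = 0 := by rw [hCB, Matrix.zero_mul]

theorem eq_mul_mul_of_mul_conjTranspose_eq [DecidableEq m] [DecidableEq r] {A : Matrix m k R} {B : Matrix m r R}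
    {L : Matrix r m R} (hL : L * B = 1) (hAB : A * Aᴴ = B * Bᴴ) : A = B * (L * A) := by
  have hkill : (1 - B * L) * B = 0 := by
    rw [Matrix.sub_mul, Matrix.mul_assoc, hL, Matrix.one_mul, Matrix.mul_one, sub_self]
  have := mul_eq_zero_of_mul_conjTranspose_eq hAB hkill
  rwa [Matrix.sub_mul, Matrix.one_mul, Matrix.mul_assoc, sub_eq_zero] at this

theorem mul_conjTranspose_eq_iff_exists_coisometry [DecidableEq m] [DecidableEq r] {A : Matrix m k R} {B : Matrix m r R}
    {L : Matrix r m R} (hL : L * B = 1) :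
    A * Aᴴ = B * Bᴴ ↔ ∃ T : Matrix r k R, T * Tᴴ = 1 ∧ A = B * T := by
  constructor
  · intro hAB
    refine ⟨L * A, ?_, eq_mul_mul_of_mul_conjTranspose_eq hL hAB⟩
    calc L * A * (L * A)ᴴ = L * (A * Aᴴ) * Lᴴ := by
          simp only [conjTranspose_mul, Matrix.mul_assoc]
      _ = (L * B) * (L * B)ᴴ := by simp only [hAB, conjTranspose_mul, Matrix.mul_assoc]
      _ = 1 := by rw [hL, conjTranspose_one, Matrix.one_mul]
  · rintro ⟨T, hT, rfl⟩
    rw [conjTranspose_mul, Matrix.mul_assoc, ← Matrix.mul_assoc T, hT, Matrix.one_mul]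

end StarOrderedRing

theorem diagonal_inv_mul_conjTranspose_mul_mul_diagonal {n r K : Type*} [Fintype n] [Fintype r]
    [DecidableEq r] [Field K] [StarRing K] {Φ : Matrix n r K} (hΦ : Φᴴ * Φ = 1) {d : r → K}
    (hd : ∀ i, d i ≠ 0) : diagonal (fun i => (d i)⁻¹) * Φᴴ * (Φ * diagonal d) = 1 := by
  rw [Matrix.mul_assoc, ← Matrix.mul_assoc Φᴴ, hΦ, Matrix.one_mul, diagonal_mul_diagonal,
    ← diagonal_one]
  exact congrArg diagonal (funext fun i => inv_mul_cancel₀ (hd i))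

theorem mul_diagonal_ofReal_mul_conjTranspose {n ι : Type*} [Fintype ι] [DecidableEq ι]
    (Ψ : Matrix n ι ℂ) {w : ι → ℝ} (hw : ∀ k, 0 ≤ w k) :
    Ψ * diagonal (fun k => (w k : ℂ)) * Ψᴴ =
      Ψ * diagonal (fun k => (Real.sqrt (w k) : ℂ)) *
        (Ψ * diagonal (fun k => (Real.sqrt (w k) : ℂ)))ᴴ := by
  rw [conjTranspose_mul, diagonal_conjTranspose, ← Matrix.mul_assoc,
    Matrix.mul_assoc Ψ (diagonal fun k => (Real.sqrt (w k) : ℂ)), diagonal_mul_diagonal]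
  congr 3
  funext k
  rw [Pi.star_apply, Complex.star_def, Complex.conj_ofReal, ← Complex.ofReal_mul,
    Real.mul_self_sqrt (hw k)]

end Matrix

theorem hjw_realisation_general {N R K : ℕ}
    (ρ : Matrix (Fin N) (Fin N) ℂ)
    (Φ : Matrix (Fin N) (Fin R) ℂ) (m : Fin R → ℝ)
    (hΦ : Φᴴ * Φ = 1) (hm : ∀ i, 0 < m i)
    (hdecomp : ρ = Φ * Matrix.diagonal (fun i => (m i : ℂ)) * Φᴴ)
    (Ψ : Matrix (Fin N) (Fin K) ℂ) (w : Fin K → ℝ) (hw : ∀ k, 0 ≤ w k) :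
    ρ = Ψ * Matrix.diagonal (fun k => (w k : ℂ)) * Ψᴴ ↔
      ∃ T : Matrix (Fin R) (Fin K) ℂ, T * Tᴴ = 1 ∧
        Ψ * Matrix.diagonal (fun k => (Real.sqrt (w k) : ℂ)) =
          Φ * Matrix.diagonal (fun i => (Real.sqrt (m i) : ℂ)) * T := by
  have hsqrt : ∀ i, (Real.sqrt (m i) : ℂ) ≠ 0 := fun i =>
    Complex.ofReal_ne_zero.mpr (Real.sqrt_ne_zero'.mpr (hm i))
  rw [hdecomp, mul_diagonal_ofReal_mul_conjTranspose Φ (fun i => (hm i).le),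
    mul_diagonal_ofReal_mul_conjTranspose Ψ hw]
  exact eq_comm.trans (mul_conjTranspose_eq_iff_exists_coisometry
    (diagonal_inv_mul_conjTranspose_mul_mul_diagonal hΦ hsqrt))

/-- Hughston–Jozsa–Wootters lemma: all realisations `ρ = Ψ W Ψ†` of a positive
semidefinite matrix `ρ` with eigenvalue decomposition `ρ = Φ M Φ†` (restricted to the
`R` nonzero eigenvalues) come from right-unitary matrices `T`. -/
theorem hjw_realisation {N R K : ℕ}
    (ρ : Matrix (Fin N) (Fin N) ℂ) (hρ : ρ.PosSemidef) (hrank : ρ.rank = R)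
    (Φ : Matrix (Fin N) (Fin R) ℂ) (m : Fin R → ℝ)
    (hΦ : Φᴴ * Φ = 1) (hm : ∀ i, 0 < m i)
    (hdecomp : ρ = Φ * Matrix.diagonal (fun i => (m i : ℂ)) * Φᴴ)
    (Ψ : Matrix (Fin N) (Fin K) ℂ) (w : Fin K → ℝ) (hw : ∀ k, 0 ≤ w k) :
    ρ = Ψ * Matrix.diagonal (fun k => (w k : ℂ)) * Ψᴴ ↔
      ∃ T : Matrix (Fin R) (Fin K) ℂ, T * Tᴴ = 1 ∧
        Ψ * Matrix.diagonal (fun k => (Real.sqrt (w k) : ℂ)) =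
          Φ * Matrix.diagonal (fun i => (Real.sqrt (m i) : ℂ)) * T :=
  hjw_realisation_general ρ Φ m hΦ hm hdecomp Ψ w hw
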